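/- Let p ≥ 1, let q ≥ 1, set η = max(1/q − 1/2, 0) and f_p(x) = 1/(1 + ‖x‖_q), and let X_1, …, X_n be independent random vectors each uniformly distributed on [0,1]^p. Then for every δ > 0, P( | ( (1/n)·Σ_{i=1}^n f_p(X_i) − E[f_p(X_1)] ) / E[f_p(X_1)] | > δ ) ≤ 2·exp( −2δ²n / (p^{2η}·(2 + p)²) ). -/

import Mathlib

open MeasureTheory ProbabilityTheory

/-- The `ℓ_q`-norm `‖x‖_q = (∑ j |x j|^q)^{1/q}` on `ℝ^p` (for real `q`). -/
noncomputable def lqNorm {p : ℕ} (q : ℝ) (x : EuclideanSpace ℝ (Fin p)) : ℝ :=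
  (∑ j, |x j| ^ q) ^ (1 / q)

/-!
The summands `1 / (1 + ‖X i‖_q)` take values in `[0, 1]`, so Hoeffding's inequality bounds the
probability that their sum deviates from its mean by more than `n δ m` by `2 exp (-2 n δ² m²)`,
where `m = E[1 / (1 + ‖X‖_q)]`. Jensen's inequality for the convex map `t ↦ 1 / (1 + t)`,
together with `‖x‖_q ≤ ‖x‖_1` and `E‖X‖_1 = p / 2`, gives `m ≥ 2 / (2 + p)`. The factor
`p ^ (2 η) ≥ 1` only weakens the bound.
-/

open Real

lemma Finset.sum_rpow_le_rpow_sum {ι : Type*} (s : Finset ι) {f : ι → ℝ} (hf : ∀ i ∈ s, 0 ≤ f i)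
    {q : ℝ} (hq : 1 ≤ q) : ∑ i ∈ s, f i ^ q ≤ (∑ i ∈ s, f i) ^ q := by
  classical
  induction s using Finset.induction_on with
  | empty => simp [zero_rpow (by positivity : q ≠ 0)]
  | insert i s hi ih =>
    rw [Finset.sum_insert hi, Finset.sum_insert hi]
    have hs : ∀ j ∈ s, 0 ≤ f j := fun j hj ↦ hf j (Finset.mem_insert_of_mem hj)
    grw [ih hs]
    exact add_rpow_le_rpow_add (hf i (Finset.mem_insert_self i s)) (Finset.sum_nonneg hs) hq

lemma one_div_one_add_integral_le_integral {α : Type*} [MeasurableSpace α] {μ : Measure α}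
    [IsProbabilityMeasure μ] {T : α → ℝ} (hT : ∀ᵐ x ∂μ, 0 ≤ T x) (hTi : Integrable T μ) :
    1 / (1 + ∫ x, T x ∂μ) ≤ ∫ x, 1 / (1 + T x) ∂μ := by
  have hconv : ConvexOn ℝ (Set.Ici 0) fun t : ℝ ↦ 1 / (1 + t) := by
    refine (((convexOn_zpow (-1)).translate_right 1).subset (fun t ht ↦ ?_) (convex_Ici 0)).congr
      fun t _ ↦ ?_
    · simp only [Set.mem_preimage, Set.mem_Ioi]; linarith [Set.mem_Ici.mp ht]
    · simp
  refine hconv.map_integral_le (fun t ht ↦ ?_) isClosed_Ici hT hTi ?_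
  · have : 1 + t ≠ 0 := by linarith [Set.mem_Ici.mp ht]
    fun_prop (disch := exact this)
  · refine Integrable.mono' (integrable_const 1) ?_ (hT.mono fun x hx ↦ ?_)
    · exact (by fun_prop : Measurable fun t : ℝ ↦ 1 / (1 + t)).comp_aemeasurable
        hTi.aemeasurable |>.aestronglyMeasurable
    · rw [Function.comp_apply, norm_of_nonneg (by positivity), div_le_one (by positivity)]
      linarith

lemma measureReal_le_abs_sum_sub_integral_le {Ω ι : Type*} [MeasurableSpace Ω] {μ : Measure Ω}
    [IsProbabilityMeasure μ] [Fintype ι] {Y : ι → Ω → ℝ} (hmeas : ∀ i, AEMeasurable (Y i) μ)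
    (hindep : iIndepFun Y μ) {a b : ℝ} (hY : ∀ i, ∀ᵐ ω ∂μ, Y i ω ∈ Set.Icc a b) {t : ℝ}
    (ht : 0 ≤ t) :
    μ.real {ω | Fintype.card ι * t ≤ |∑ i, (Y i ω - μ[Y i])|}
      ≤ 2 * exp (-2 * Fintype.card ι * t ^ 2 / (b - a) ^ 2) := by
  set N : ℝ := (Fintype.card ι : ℝ)
  have hsum : HasSubgaussianMGF (fun ω ↦ ∑ i, (Y i ω - μ[Y i]))
      (∑ _i : ι, (‖b - a‖₊ / 2) ^ 2) μ :=
    HasSubgaussianMGF.sum_of_iIndepFun (hindep.comp _ fun _ ↦ measurable_id.sub_const _)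
      fun i _ ↦ hasSubgaussianMGF_of_mem_Icc (hmeas i) (hY i)
  have hexp : (N * t) ^ 2 / (2 * ((∑ _i : ι, (‖b - a‖₊ / 2) ^ 2 : NNReal) : ℝ))
      = 2 * N * t ^ 2 / (b - a) ^ 2 := by
    simp only [Finset.sum_const, Finset.card_univ, nsmul_eq_mul, NNReal.coe_mul,
      NNReal.coe_natCast, NNReal.coe_pow, NNReal.coe_div, coe_nnnorm, norm_eq_abs,
      NNReal.coe_ofNat, div_pow, sq_abs]
    generalize (b - a) ^ 2 = d
    -- `N * N / N` rather than `N`, so that the empty index type needs no separate case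
    rw [show (N * t) ^ 2 / (2 * (N * (d / 2 ^ 2))) = N * N / N * (2 * t ^ 2 / d) by ring,
      mul_self_div_self]
    ring
  have hNt : 0 ≤ N * t := by positivity
  calc μ.real {ω | N * t ≤ |∑ i, (Y i ω - μ[Y i])|}
      ≤ μ.real ({ω | N * t ≤ ∑ i, (Y i ω - μ[Y i])} ∪ {ω | N * t ≤ -∑ i, (Y i ω - μ[Y i])}) :=
        measureReal_mono fun _ h ↦ by simpa only [Set.mem_union, Set.mem_ofPred_eq, le_abs] using h
    _ ≤ μ.real {ω | N * t ≤ ∑ i, (Y i ω - μ[Y i])}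
          + μ.real {ω | N * t ≤ -∑ i, (Y i ω - μ[Y i])} :=
        measureReal_union_le _ _
    _ ≤ 2 * exp (-2 * N * t ^ 2 / (b - a) ^ 2) := by
      have h₁ := hsum.measure_ge_le hNt
      have h₂ := hsum.neg.measure_ge_le hNt
      rw [neg_div, hexp] at h₁ h₂
      simp only [Pi.neg_apply] at h₂
      rw [neg_mul, neg_mul, neg_div]
      linarith

section UnitCube

variable {ι : Type*} [Fintype ι]

lemma EuclideanSpace.measurePreserving_ofLp_restrict_pi {s : ι → Set ℝ}
    (hs : ∀ i, MeasurableSet (s i)) :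
    MeasurePreserving (WithLp.ofLp (p := 2))
      (volume.restrict {x : EuclideanSpace ℝ ι | ∀ i, x i ∈ s i})
      (Measure.pi fun i ↦ volume.restrict (s i)) := by
  have hS : {x : EuclideanSpace ℝ ι | ∀ i, x i ∈ s i} = WithLp.ofLp ⁻¹' Set.univ.pi s := by
    ext; simp
  rw [hS, ← Measure.restrict_pi_pi, ← volume_pi]
  exact (PiLp.volume_preserving_ofLp ι).restrict_preimage (MeasurableSet.univ_pi hs)

instance : IsProbabilityMeasure (volume.restrict (Set.Icc (0 : ℝ) 1)) := ⟨by simp⟩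

variable (ι) in
abbrev unitCube : Set (EuclideanSpace ℝ ι) := {x | ∀ i, x i ∈ Set.Icc 0 1}

lemma measurePreserving_ofLp_unitCube :
    MeasurePreserving (WithLp.ofLp (p := 2)) (volume.restrict (unitCube ι))
      (Measure.pi fun _ : ι ↦ volume.restrict (Set.Icc (0 : ℝ) 1)) :=
  EuclideanSpace.measurePreserving_ofLp_restrict_pi fun _ ↦ measurableSet_Icc

lemma volume_unitCube : volume (unitCube ι) = 1 := by
  simpa using measurePreserving_ofLp_unitCube.measure_preimage
    (s := Set.univ) MeasurableSet.univ.nullMeasurableSet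

instance : IsProbabilityMeasure (volume.restrict (unitCube ι)) := ⟨by simp [volume_unitCube]⟩

lemma integrable_abs_apply_unitCube (j : ι) :
    Integrable (fun x : EuclideanSpace ℝ ι ↦ |x j|) (volume.restrict (unitCube ι)) :=
  measurePreserving_ofLp_unitCube.integrable_comp_of_integrable (g := fun y ↦ |y j|)
    (integrable_comp_eval (μ := fun _ ↦ volume.restrict (Set.Icc (0 : ℝ) 1)) (f := fun t ↦ |t|)
      continuous_abs.integrableOn_Icc)

lemma integral_abs_apply_unitCube (j : ι) : ∫ x in unitCube ι, |x j| = 1 / 2 := by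
  rw [measurePreserving_ofLp_unitCube.integral_comp
      (MeasurableEquiv.toLp 2 (ι → ℝ)).symm.measurableEmbedding (fun y ↦ |y j|),
    integral_comp_eval (μ := fun _ ↦ volume.restrict (Set.Icc (0 : ℝ) 1)) (f := fun t ↦ |t|)
      continuous_abs.aestronglyMeasurable,
    integral_Icc_eq_integral_Ioc, ← intervalIntegral.integral_of_le zero_le_one,
    intervalIntegral.integral_congr fun t ht ↦ abs_of_nonneg ?_, integral_id]
  · norm_num
  · exact (Set.uIcc_of_le (zero_le_one (α := ℝ)) ▸ ht).1

end UnitCube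

section LqNorm

variable {p : ℕ} {q : ℝ}

lemma lqNorm_nonneg (q : ℝ) (x : EuclideanSpace ℝ (Fin p)) : 0 ≤ lqNorm q x :=
  rpow_nonneg (Finset.sum_nonneg fun _ _ ↦ rpow_nonneg (abs_nonneg _) _) _

@[fun_prop]
lemma measurable_lqNorm (q : ℝ) : Measurable (lqNorm (p := p) q) := by
  unfold lqNorm; fun_prop

lemma lqNorm_le_sum_abs (hq : 1 ≤ q) (x : EuclideanSpace ℝ (Fin p)) :
    lqNorm q x ≤ ∑ j, |x j| := by
  have hs : 0 ≤ ∑ j, |x j| := Finset.sum_nonneg fun j _ ↦ abs_nonneg _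
  calc lqNorm q x ≤ ((∑ j, |x j|) ^ q) ^ (1 / q) :=
        rpow_le_rpow (Finset.sum_nonneg fun _ _ ↦ rpow_nonneg (abs_nonneg _) _)
          (Finset.sum_rpow_le_rpow_sum _ (fun _ _ ↦ abs_nonneg _) hq) (by positivity)
    _ = ∑ j, |x j| := by rw [one_div, rpow_rpow_inv hs (by positivity)]

lemma one_div_one_add_lqNorm_mem_Icc (q : ℝ) (x : EuclideanSpace ℝ (Fin p)) :
    1 / (1 + lqNorm q x) ∈ Set.Icc 0 1 := by
  have := lqNorm_nonneg q x
  exact ⟨by positivity, (div_le_one (by positivity)).mpr (by linarith)⟩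

lemma integrable_lqNorm_unitCube (hq : 1 ≤ q) :
    Integrable (lqNorm (p := p) q) (volume.restrict (unitCube (Fin p))) :=
  (integrable_finsetSum _ fun j _ ↦ integrable_abs_apply_unitCube j).mono'
    (measurable_lqNorm q).aestronglyMeasurable
    (ae_of_all _ fun x ↦ by
      rw [norm_of_nonneg (lqNorm_nonneg q x)]; exact lqNorm_le_sum_abs hq x)

lemma integral_lqNorm_unitCube_le (hq : 1 ≤ q) :
    ∫ x in unitCube (Fin p), lqNorm q x ≤ p / 2 := by
  calc ∫ x in unitCube (Fin p), lqNorm q x ≤ ∫ x in unitCube (Fin p), ∑ j, |x j| :=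
        integral_mono (integrable_lqNorm_unitCube hq)
          (integrable_finsetSum _ fun j _ ↦ integrable_abs_apply_unitCube j)
          (lqNorm_le_sum_abs hq)
    _ = p / 2 := by
        rw [integral_finsetSum _ fun j _ ↦ integrable_abs_apply_unitCube j]
        simp [integral_abs_apply_unitCube, div_eq_mul_inv]

lemma two_div_two_add_le_integral_unitCube (hq : 1 ≤ q) :
    2 / (2 + p) ≤ ∫ x in unitCube (Fin p), 1 / (1 + lqNorm q x) := by
  calc (2 : ℝ) / (2 + p) = 1 / (1 + p / 2) := by field_simp
    _ ≤ 1 / (1 + ∫ x in unitCube (Fin p), lqNorm q x) := by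
        have : 0 ≤ ∫ x in unitCube (Fin p), lqNorm q x := integral_nonneg (lqNorm_nonneg q)
        gcongr
        exact integral_lqNorm_unitCube_le hq
    _ ≤ ∫ x in unitCube (Fin p), 1 / (1 + lqNorm q x) :=
        one_div_one_add_integral_le_integral (ae_of_all _ (lqNorm_nonneg q))
          (integrable_lqNorm_unitCube hq)

end LqNorm

lemma mul_le_abs_sum_sub_of_lt_abs_div {n : ℕ} {y : Fin n → ℝ} {m δ : ℝ} (hm : 0 < m)
    (h : δ < |((∑ i, y i) / n - m) / m|) : n * (δ * m) ≤ |∑ i, (y i - m)| := by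
  rcases Nat.eq_zero_or_pos n with rfl | hn
  · simp
  have hsum : ∑ i, (y i - m) = n * ((∑ i, y i) / n - m) := by
    rw [Finset.sum_sub_distrib, Finset.sum_const, Finset.card_univ, Fintype.card_fin,
      nsmul_eq_mul, mul_sub, mul_div_cancel₀ _ (by positivity)]
  rw [abs_div, abs_of_pos hm, lt_div_iff₀ hm] at h
  rw [hsum, abs_mul, Nat.abs_cast]
  gcongr

lemma div_mul_sq_le_mul_sq_of_two_div_le {a c P m : ℝ} (ha : 0 ≤ a) (hc : 1 ≤ c) (hP : 0 < P)
    (hm : 2 / P ≤ m) : a / (c * P ^ 2) ≤ a * m ^ 2 := by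
  calc a / (c * P ^ 2) ≤ a * (1 / P) ^ 2 := by
        rw [div_pow, one_pow, mul_one_div]
        gcongr
        exact le_mul_of_one_le_left (by positivity) hc
    _ ≤ a * (2 / P) ^ 2 := by gcongr; norm_num
    _ ≤ a * m ^ 2 := by gcongr

theorem monte_carlo_inv_one_add_lq_norm_relative_error_general
    {p n : ℕ} (hp : 1 ≤ p) {Ω : Type*} [MeasureSpace Ω]
    [IsProbabilityMeasure (ℙ : Measure Ω)]
    (q : ℝ) (hq : 1 ≤ q)
    (S : Set (EuclideanSpace ℝ (Fin p)))
    (hS : S = {x : EuclideanSpace ℝ (Fin p) | ∀ j, x j ∈ Set.Icc (0 : ℝ) 1})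
    (X : Fin n → Ω → EuclideanSpace ℝ (Fin p))
    (hmeas : ∀ i, Measurable (X i))
    (hindep : iIndepFun X ℙ)
    (hunif : ∀ i, Measure.map (X i) ℙ = (volume S)⁻¹ • volume.restrict S)
    (δ : ℝ) (hδ : 0 < δ) :
    (ℙ {ω | δ <
        |((∑ i, 1 / (1 + lqNorm q (X i ω))) / n
            - ∫ x, 1 / (1 + lqNorm q x) ∂((volume S)⁻¹ • volume.restrict S))
          / ∫ x, 1 / (1 + lqNorm q x) ∂((volume S)⁻¹ • volume.restrict S)|}).toReal
      ≤ 2 * Real.exp (-2 * δ ^ 2 * n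
          / ((p : ℝ) ^ (2 * max (1 / q - 1 / 2) 0) * (2 + (p : ℝ)) ^ 2)) := by
  subst hS
  simp only [volume_unitCube, inv_one, one_smul] at hunif ⊢
  set f : EuclideanSpace ℝ (Fin p) → ℝ := fun x ↦ 1 / (1 + lqNorm q x)
  set m := ∫ x in unitCube (Fin p), f x
  have hm : 2 / (2 + p) ≤ m := two_div_two_add_le_integral_unitCube hq
  have hm0 : 0 < m := lt_of_lt_of_le (by positivity) hm
  have hmean : ∀ i, ∫ ω, f (X i ω) = m := fun i ↦ by
    rw [← integral_map (hmeas i).aemeasurable (by fun_prop), hunif i]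
  calc (ℙ {ω | δ < |((∑ i, f (X i ω)) / n - m) / m|}).toReal
      ≤ (ℙ : Measure Ω).real {ω | n * (δ * m) ≤ |∑ i, (f (X i ω) - ∫ ω', f (X i ω'))|} :=
        measureReal_mono fun ω h ↦ by
          simpa only [Set.mem_ofPred_eq, hmean] using mul_le_abs_sum_sub_of_lt_abs_div hm0 h
    _ ≤ 2 * exp (-2 * n * (δ * m) ^ 2 / (1 - 0) ^ 2) := by
        simpa only [Fintype.card_fin] using measureReal_le_abs_sum_sub_integral_le
          (Y := fun i ω ↦ f (X i ω)) (fun i ↦ by fun_prop)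
          (hindep.comp (fun _ ↦ f) fun _ ↦ by fun_prop)
          (fun i ↦ ae_of_all _ fun ω ↦ one_div_one_add_lqNorm_mem_Icc q (X i ω))
          (by positivity : 0 ≤ δ * m)
    _ ≤ _ := by
        rw [sub_zero, one_pow, div_one, show -2 * n * (δ * m) ^ 2 = -(2 * δ ^ 2 * n * m ^ 2) by
          ring, neg_mul, neg_mul, neg_div]
        gcongr
        exact div_mul_sq_le_mul_sq_of_two_div_le (by positivity)
          (one_le_rpow (by exact_mod_cast hp) (by positivity)) (by positivity) hm

/-- Relative-error concentration for the Monte Carlo estimate of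
`E[1/(1 + ‖X‖_q)]` from iid uniform samples on the unit cube `[0,1]^p`, where
`η = max(1/q - 1/2, 0)`. -/
theorem monte_carlo_inv_one_add_lq_norm_relative_error
    {p n : ℕ} (hp : 1 ≤ p) (hn : 0 < n) {Ω : Type*} [MeasureSpace Ω]
    [IsProbabilityMeasure (ℙ : Measure Ω)]
    (q : ℝ) (hq : 1 ≤ q)
    (S : Set (EuclideanSpace ℝ (Fin p)))
    (hS : S = {x : EuclideanSpace ℝ (Fin p) | ∀ j, x j ∈ Set.Icc (0 : ℝ) 1})
    (X : Fin n → Ω → EuclideanSpace ℝ (Fin p))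
    (hmeas : ∀ i, Measurable (X i))
    (hindep : iIndepFun X ℙ)
    (hunif : ∀ i, Measure.map (X i) ℙ = (volume S)⁻¹ • volume.restrict S)
    (δ : ℝ) (hδ : 0 < δ) :
    (ℙ {ω | δ <
        |((∑ i, 1 / (1 + lqNorm q (X i ω))) / n
            - ∫ x, 1 / (1 + lqNorm q x) ∂((volume S)⁻¹ • volume.restrict S))
          / ∫ x, 1 / (1 + lqNorm q x) ∂((volume S)⁻¹ • volume.restrict S)|}).toReal
      ≤ 2 * Real.exp (-2 * δ ^ 2 * n
          / ((p : ℝ) ^ (2 * max (1 / q - 1 / 2) 0) * (2 + (p : ℝ)) ^ 2)) :=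
  monte_carlo_inv_one_add_lq_norm_relative_error_general hp q hq S hS X hmeas hindep hunif δ hδ
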